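/- Let t be a substring of T and let s ∈ S_t. Then there exist nonnegative integers a and b such that s[a+1, |s|−b] = t and the map sending (l, r) ∈ occ_T(s) to (l+a, r−b) is a bijection from occ_T(s) onto occ_T(t). In particular, when the elements of occ_T(t) and occ_T(s) are each sorted by their left endpoint and matched in order, every matched pair (l_t, r_t) ∈ occ_T(t), (l_s, r_s) ∈ occ_T(s) satisfies l_t − l_s = a and r_s − r_t = b. -/
import Mathlib


/-- `frag T i j` is the fragment `T[i, j]` of `T` (1-indexed, inclusive). -/
def frag {α : Type*} (T : List α) (i j : ℕ) : List α := (T.drop (i - 1)).take (j - i + 1)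

/-- `t` is a substring of `T`, i.e. `t = T[i, j]` for some `1 ≤ i ≤ j ≤ |T|`. -/
def IsSub {α : Type*} (T t : List α) : Prop :=
  ∃ i j : ℕ, 1 ≤ i ∧ i ≤ j ∧ j ≤ T.length ∧ frag T i j = t

/-- `occ T t` is the set of occurrences of `t` in `T`: pairs `(i, j)` with
`1 ≤ i ≤ j ≤ |T|` and `T[i, j] = t`. -/
def occ {α : Type*} (T t : List α) : Set (ℕ × ℕ) :=
  {p | 1 ≤ p.1 ∧ p.1 ≤ p.2 ∧ p.2 ≤ T.length ∧ frag T p.1 p.2 = t}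

/-- `Sset T t` is the set `S_t`: substrings `s` of `T` such that `t` occurs in `s`
and `|occ_T(t)| = |occ_T(s)|`. -/
def Sset {α : Type*} (T t : List α) : Set (List α) :=
  {s | IsSub T s ∧ (∃ a b : ℕ, 1 ≤ a ∧ a ≤ b ∧ b ≤ s.length ∧ frag s a b = t) ∧
    (occ T t).ncard = (occ T s).ncard}

lemma frag_length {α : Type*} (T : List α) (i j : ℕ) (h1 : 1 ≤ i) (h2 : i ≤ j)
    (h3 : j ≤ T.length) : (frag T i j).length = j - i + 1 := by
  simp only [frag, List.length_take, List.length_drop]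
  omega

lemma frag_frag {α : Type*} (T s : List α) (l r a0 b0 : ℕ)
    (h1 : 1 ≤ l) (h2 : l ≤ r) (h3 : r ≤ T.length) (hfr : frag T l r = s)
    (h4 : 1 ≤ a0) (h5 : a0 ≤ b0) (h6 : b0 ≤ s.length) :
    frag T (l + a0 - 1) (l + b0 - 1) = frag s a0 b0 := by
  have hlen : s.length = r - l + 1 := by rw [← hfr]; exact frag_length T l r h1 h2 h3
  rw [hlen] at h6
  subst hfr
  simp only [frag, List.drop_take, List.drop_drop, List.take_take]
  rw [show l + b0 - 1 - (l + a0 - 1) + 1 = b0 - a0 + 1 by omega,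
    show l - 1 + (a0 - 1) = l + a0 - 1 - 1 by omega,
    show (b0 - a0 + 1) ⊓ (r - l + 1 - (a0 - 1)) = b0 - a0 + 1 by omega]

lemma occ_finite {α : Type*} (T t : List α) : (occ T t).Finite := by
  apply Set.Finite.subset (Set.finite_Icc (1, 1) (T.length, T.length))
  rintro ⟨l, r⟩ ⟨h1, h2, h3, _⟩
  simp only [Set.mem_Icc, Prod.mk_le_mk]
  omega

/-- If `t` is a substring of `T` and `s ∈ S_t`, then there exist nonnegative integers
`a, b` with `s[a+1, |s|-b] = t` such that `(l, r) ↦ (l + a, r - b)` is a bijection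
from `occ_T(s)` onto `occ_T(t)`. -/
theorem occBijection {α : Type*} (T t s : List α) (ht : IsSub T t) (hs : s ∈ Sset T t) :
    ∃ a b : ℕ, frag s (a + 1) (s.length - b) = t ∧
      Set.BijOn (fun p : ℕ × ℕ => (p.1 + a, p.2 - b)) (occ T s) (occ T t) := by
  obtain ⟨hsub, ⟨a0, b0, ha0, hab, hb0, hfrag⟩, hcard⟩ := hs
  refine ⟨a0 - 1, s.length - b0, ?_, ?_⟩
  · rw [show a0 - 1 + 1 = a0 by omega, show s.length - (s.length - b0) = b0 by omega]
    exact hfrag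
  · set f : ℕ × ℕ → ℕ × ℕ := fun p => (p.1 + (a0 - 1), p.2 - (s.length - b0)) with hf
    have key : ∀ p ∈ occ T s, f p ∈ occ T t := by
      rintro ⟨l, r⟩ ⟨h1, h2, h3, h4⟩
      have hlen : s.length = r - l + 1 := by rw [← h4]; exact frag_length T l r h1 h2 h3
      have hff := frag_frag T s l r a0 b0 h1 h2 h3 h4 ha0 hab hb0
      rw [hfrag] at hff
      simp only [hf, occ, Set.mem_setOf_eq]
      refine ⟨by omega, by omega, by omega, ?_⟩
      rw [show l + (a0 - 1) = l + a0 - 1 by omega,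
        show r - (s.length - b0) = l + b0 - 1 by omega]
      exact hff
    have hinj : Set.InjOn f (occ T s) := by
      rintro ⟨l1, r1⟩ ⟨h1, h2, h3, h4⟩ ⟨l2, r2⟩ ⟨g1, g2, g3, g4⟩ heq
      have hlen1 : s.length = r1 - l1 + 1 := by rw [← h4]; exact frag_length T l1 r1 h1 h2 h3
      have hlen2 : s.length = r2 - l2 + 1 := by rw [← g4]; exact frag_length T l2 r2 g1 g2 g3
      simp only [hf, Prod.mk.injEq] at heq
      obtain ⟨e1, e2⟩ := heq
      have : l1 = l2 := by omega
      subst this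
      have : r1 = r2 := by omega
      subst this
      rfl
    have himg : f '' (occ T s) = occ T t := by
      apply Set.eq_of_subset_of_ncard_le
      · rintro p ⟨q, hq, rfl⟩; exact key q hq
      · rw [Set.ncard_image_of_injOn hinj]; omega
      · exact occ_finite T t
    rw [← himg]
    exact hinj.bijOn_image
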